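/- Let M be a compact nowhere dense subset of ℝ² and ε > 0. Then there exists an ε-homeomorphism of ℝ² (a homeomorphism moving each point less than ε) taking M to a set M₁ such that the topological boundary of M₁ contains no vertical segment of length ≥ ε. -/

import Mathlib

/-!
Use a horizontal shear `(x, y) ↦ (x + g y, y)` with `g` bounded continuous and `‖g‖ < ε`. Its
image of `M` contains the vertical segment `{a} × [c, d]` iff `(a - g y, y) ∈ M` for all
`y ∈ [c, d]`. For fixed `c < d` the set of such `g` is closed, by compactness of `M`, and has
empty interior: if a ball of radius `2r` around `f` consisted of such `g`, then so would every
`f + r sin (N ·)`, and letting `N → ∞` along a subsequence on which the positions `a` converge to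
`α` forces `M` to contain the band `{(α - f y - v, y) : |v| ≤ r, c < y < d}`. By Baire's theorem
a small `g` avoids these sets for all rational `c < d`; since the image is closed, its frontier
lies inside it.
-/

open Set Function Topology

abbrev Plane := EuclideanSpace ℝ (Fin 2)

open Filter Real BoundedContinuousFunction

noncomputable section

def pt (x y : ℝ) : Plane := !₂[x, y]

@[simp] lemma pt_apply_zero (x y : ℝ) : pt x y 0 = x := by simp [pt]

@[simp] lemma pt_apply_one (x y : ℝ) : pt x y 1 = y := by simp [pt]

@[simp] lemma pt_eta (p : Plane) : pt (p 0) (p 1) = p := by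
  ext i; fin_cases i <;> simp

@[fun_prop] lemma continuous_pt : Continuous fun q : ℝ × ℝ => pt q.1 q.2 := by
  unfold pt; fun_prop

lemma dist_pt_pt (x x' y : ℝ) : dist (pt x y) (pt x' y) = |x - x'| := by
  simp [EuclideanSpace.dist_eq, pt, Fin.sum_univ_two, Real.dist_eq, Real.sqrt_sq_eq_abs]

lemma Bornology.IsBounded.exists_abs_le_of_pt_mem {M : Set Plane} (hM : Bornology.IsBounded M) :
    ∃ R, ∀ x y, pt x y ∈ M → |x| ≤ R := by
  obtain ⟨R, hR⟩ := isBounded_iff_forall_norm_le.1 hM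
  exact ⟨R, fun x y h => by simpa using (PiLp.norm_apply_le (pt x y) 0).trans (hR _ h)⟩

def verticalSegment (a c d : ℝ) : Set Plane := {p | p 0 = a ∧ p 1 ∈ Icc c d}

lemma verticalSegment_mono {a c c' d d' : ℝ} (hc : c ≤ c') (hd : d' ≤ d) :
    verticalSegment a c' d' ⊆ verticalSegment a c d :=
  fun _ ⟨h0, h1⟩ => ⟨h0, Icc_subset_Icc hc hd h1⟩

def shear (g : ℝ →ᵇ ℝ) : Plane ≃ₜ Plane where
  toFun p := pt (p 0 + g (p 1)) (p 1)
  invFun p := pt (p 0 - g (p 1)) (p 1)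
  left_inv p := by simp
  right_inv p := by simp
  continuous_toFun := by fun_prop
  continuous_invFun := by fun_prop

lemma shear_symm_pt (g : ℝ →ᵇ ℝ) (x y : ℝ) : (shear g).symm (pt x y) = pt (x - g y) y := by
  simp [shear]

lemma dist_shear_self (g : ℝ →ᵇ ℝ) (p : Plane) : dist (shear g p) p = |g (p 1)| := by
  have h := dist_pt_pt (p 0 + g (p 1)) (p 0) (p 1)
  rwa [pt_eta, add_sub_cancel_left] at h

lemma verticalSegment_subset_shear_image_iff {M : Set Plane} {g : ℝ →ᵇ ℝ} {a c d : ℝ} :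
    verticalSegment a c d ⊆ shear g '' M ↔ ∀ y ∈ Icc c d, pt (a - g y) y ∈ M := by
  rw [Homeomorph.image_eq_preimage_symm]
  constructor
  · intro h y hy
    simpa [shear_symm_pt] using h (show pt a y ∈ verticalSegment a c d by simpa [verticalSegment])
  · rintro h p ⟨rfl, hp⟩
    have h' := h _ hp
    rwa [← shear_symm_pt, pt_eta] at h'

def segmentShears (M : Set Plane) (c d : ℝ) : Set (ℝ →ᵇ ℝ) :=
  {g | ∃ a, verticalSegment a c d ⊆ shear g '' M}

lemma mem_segmentShears {M : Set Plane} {c d : ℝ} {g : ℝ →ᵇ ℝ} :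
    g ∈ segmentShears M c d ↔ ∃ a, ∀ y ∈ Icc c d, pt (a - g y) y ∈ M := by
  simp only [segmentShears, mem_ofPred_eq, verticalSegment_subset_shear_image_iff]

lemma isClosed_segmentShears {M : Set Plane} (hM : IsCompact M) {c d : ℝ} (hcd : c ≤ d) :
    IsClosed (segmentShears M c d) := by
  obtain ⟨R, hR⟩ := hM.isBounded.exists_abs_le_of_pt_mem
  -- the offset `a - g c` ranges over a compact interval, so this is a projection along it
  have hproj : segmentShears M c d = Prod.fst ''
      {q : (ℝ →ᵇ ℝ) × Icc (-R) R | ∀ y ∈ Icc c d, pt (q.2 + q.1 c - q.1 y) y ∈ M} := by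
    ext g
    simp only [mem_segmentShears, mem_image, mem_ofPred_eq, Prod.exists, exists_and_right,
      exists_eq_right, Subtype.exists, mem_Icc]
    constructor
    · rintro ⟨a, ha⟩
      exact ⟨a - g c, abs_le.1 (hR _ _ (ha c ⟨le_rfl, hcd⟩)), fun y hy => by simpa using ha y hy⟩
    · rintro ⟨b, -, hb⟩
      exact ⟨b + g c, hb⟩
  rw [hproj]
  refine isClosedMap_fst_of_compactSpace _ ?_
  simp only [ofPred_forall]
  exact isClosed_biInter fun y _ => hM.isClosed.preimage (by fun_prop)

def sinWave (r N : ℝ) : ℝ →ᵇ ℝ :=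
  .ofNormedAddCommGroup (fun y => r * sin (N * y)) (by fun_prop) |r| fun y => by
    simpa [abs_mul] using mul_le_mul_of_nonneg_left (abs_sin_le_one (N * y)) (abs_nonneg r)

@[simp] lemma sinWave_apply (r N y : ℝ) : sinWave r N y = r * sin (N * y) := rfl

lemma norm_sinWave_le (r N : ℝ) : ‖sinWave r N‖ ≤ |r| :=
  BoundedContinuousFunction.norm_ofNormedAddCommGroup_le _ (abs_nonneg r) _

lemma exists_tendsto_sin_mul_eq {ι : Type*} {l : Filter ι} {N : ι → ℝ} (hN : Tendsto N l atTop)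
    (y : ℝ) {w : ℝ} (hw : w ∈ Icc (-1) 1) :
    ∃ Y : ι → ℝ, Tendsto Y l (𝓝 y) ∧ ∀ᶠ k in l, sin (N k * Y k) = w := by
  set θ : ι → ℝ := fun k => toIcoMod two_pi_pos (N k * y) (arcsin w)
  refine ⟨fun k => θ k / N k, ?_, ?_⟩
  · have hbound : ∀ᶠ k in l, θ k / N k ∈ Icc y (y + 2 * π / N k) := by
      filter_upwards [hN.eventually_gt_atTop 0] with k hk
      obtain ⟨hlo, hhi⟩ := toIcoMod_mem_Ico two_pi_pos (N k * y) (arcsin w)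
      constructor
      · rw [le_div_iff₀ hk]; linarith
      · rw [div_le_iff₀ hk, add_mul, div_mul_cancel₀ _ hk.ne']; linarith
    have hupper : Tendsto (fun k => y + 2 * π / N k) l (𝓝 y) := by
      simpa using tendsto_const_nhds.add (tendsto_const_nhds.div_atTop hN)
    exact tendsto_of_tendsto_of_tendsto_of_le_of_le' tendsto_const_nhds hupper
      (hbound.mono fun _ h => h.1) (hbound.mono fun _ h => h.2)
  · filter_upwards [hN.eventually_gt_atTop 0] with k hk
    rw [mul_div_cancel₀ _ hk.ne']
    simp only [θ]
    rw [← self_sub_toIcoDiv_zsmul, sin_periodic.sub_zsmul_eq, sin_arcsin hw.1 hw.2]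

lemma pt_mem_of_tendsto_sin {M : Set Plane} (hM : IsClosed M) {f : ℝ → ℝ} (hf : Continuous f)
    {ι : Type*} {l : Filter ι} [l.NeBot] {N a : ι → ℝ} {α c d r : ℝ} (hN : Tendsto N l atTop)
    (ha : Tendsto a l (𝓝 α)) (h : ∀ k, ∀ y ∈ Icc c d, pt (a k - f y - r * sin (N k * y)) y ∈ M)
    {y : ℝ} (hy : y ∈ Ioo c d) {w : ℝ} (hw : w ∈ Icc (-1) 1) : pt (α - f y - r * w) y ∈ M := by
  obtain ⟨Y, hY, hsin⟩ := exists_tendsto_sin_mul_eq hN y hw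
  have hlim : Tendsto (fun k => pt (a k - f (Y k) - r * w) (Y k)) l (𝓝 (pt (α - f y - r * w) y)) :=
    (continuous_pt.tendsto _).comp
      (((ha.sub ((hf.tendsto y).comp hY)).sub tendsto_const_nhds).prodMk_nhds hY)
  refine hM.mem_of_tendsto hlim ?_
  filter_upwards [hsin, hY (Icc_mem_nhds hy.1 hy.2)] with k hk hYk
  simpa [hk] using h k (Y k) hYk

lemma interior_nonempty_of_forall_pt_mem {M : Set Plane} {f : ℝ → ℝ} (hf : Continuous f)
    {α c d r : ℝ} (hcd : c < d) (hr : 0 < r)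
    (h : ∀ y ∈ Ioo c d, ∀ w ∈ Icc (-1) 1, pt (α - f y - r * w) y ∈ M) : (interior M).Nonempty := by
  set U : Set Plane := (fun p : Plane => (p 1, (α - f (p 1) - p 0) / r)) ⁻¹' Ioo c d ×ˢ Ioo (-1) 1
  have hUM : U ⊆ M := by
    rintro p ⟨hy, hw⟩
    have hp := h _ hy _ (Ioo_subset_Icc_self hw)
    rwa [mul_div_cancel₀ _ hr.ne', sub_sub_cancel, pt_eta] at hp
  have hU : IsOpen U := (isOpen_Ioo.prod isOpen_Ioo).preimage (by fun_prop)
  refine ⟨pt (α - f ((c + d) / 2)) ((c + d) / 2), interior_maximal hUM hU ?_⟩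
  simp only [U, mem_preimage, mem_prod, pt_apply_one, pt_apply_zero, sub_self, zero_div]
  exact ⟨⟨by linarith, by linarith⟩, by norm_num⟩

lemma interior_segmentShears {M : Set Plane} (hM : IsCompact M) (hnd : interior M = ∅) {c d : ℝ}
    (hcd : c < d) : interior (segmentShears M c d) = ∅ := by
  refine eq_empty_iff_forall_notMem.2 fun f hf => ?_
  obtain ⟨ρ, hρ, hball⟩ := Metric.mem_nhds_iff.1 (mem_interior_iff_mem_nhds.1 hf)
  set r := ρ / 2
  have hr : 0 < r := half_pos hρ
  have hwave : ∀ n : ℕ, ∃ a, ∀ y ∈ Icc c d, pt (a - f y - r * sin ((n + 1) * y)) y ∈ M := by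
    intro n
    have hclose : f + sinWave r (n + 1) ∈ Metric.ball f ρ := by
      rw [Metric.mem_ball, dist_eq_norm, add_sub_cancel_left]
      exact (norm_sinWave_le _ _).trans_lt (by rw [abs_of_pos hr]; exact half_lt_self hρ)
    obtain ⟨a, ha⟩ := mem_segmentShears.1 (hball hclose)
    exact ⟨a, fun y hy => by simpa [sub_sub] using ha y hy⟩
  choose a ha using hwave
  obtain ⟨R, hR⟩ := hM.isBounded.exists_abs_le_of_pt_mem
  have hbdd : ∀ n, a n ∈ Icc (f c - R - r) (f c + R + r) := by
    intro n
    have hRn := abs_le.1 (hR _ _ (ha n c ⟨le_rfl, hcd.le⟩))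
    have hsin := abs_le.1 (abs_sin_le_one ((n + 1) * c))
    constructor <;> nlinarith
  obtain ⟨α, -, φ, hφ, hα⟩ := tendsto_subseq_of_bounded (Metric.isBounded_Icc _ _) hbdd
  have hN : Tendsto (fun k => (φ k : ℝ) + 1) atTop atTop :=
    tendsto_atTop_add_const_right _ 1 (tendsto_natCast_atTop_atTop.comp hφ.tendsto_atTop)
  have hband : ∀ y ∈ Ioo c d, ∀ w ∈ Icc (-1) 1, pt (α - f y - r * w) y ∈ M := fun y hy w hw =>
    pt_mem_of_tendsto_sin hM.isClosed f.continuous hN hα (fun k => ha (φ k)) hy hw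
  exact (interior_nonempty_of_forall_pt_mem f.continuous hcd hr hband).ne_empty hnd

lemma exists_norm_lt_forall_notMem_segmentShears {M : Set Plane} (hM : IsCompact M)
    (hnd : interior M = ∅) {ε : ℝ} (hε : 0 < ε) :
    ∃ g : ℝ →ᵇ ℝ, ‖g‖ < ε ∧ ∀ p q : ℚ, (p : ℝ) < q → g ∉ segmentShears M p q := by
  have hdense : Dense (⋂ r ∈ {r : ℚ × ℚ | (r.1 : ℝ) < r.2}, (segmentShears M r.1 r.2)ᶜ) :=
    dense_biInter_of_isOpen (fun r hr => (isClosed_segmentShears hM hr.le).isOpen_compl)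
      (to_countable _)
      (fun r hr => interior_eq_empty_iff_dense_compl.1 (interior_segmentShears hM hnd hr))
  obtain ⟨g, hg, hgood⟩ :=
    hdense.inter_open_nonempty _ Metric.isOpen_ball ⟨0, Metric.mem_ball_self hε⟩
  exact ⟨g, mem_ball_zero_iff.1 hg, fun p q hpq => mem_iInter₂.1 hgood (p, q) hpq⟩

end

/-- A compact nowhere dense subset `M` of the plane can be moved by an
`ε`-homeomorphism of the plane so that the boundary of the image contains no
vertical segment of length at least `ε`. -/
theorem stmt_17 (M : Set Plane) (hM : IsCompact M) (hnd : interior M = ∅)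
    (ε : ℝ) (hε : 0 < ε) :
    ∃ φ : Plane ≃ₜ Plane, (∀ x : Plane, dist (φ x) x < ε) ∧
      ∀ a c d : ℝ, ε ≤ d - c →
        ¬ ({p : Plane | p 0 = a ∧ p 1 ∈ Set.Icc c d} ⊆ frontier (φ '' M)) := by
  obtain ⟨g, hg, hgood⟩ := exists_norm_lt_forall_notMem_segmentShears hM hnd hε
  refine ⟨shear g, fun x => ?_, fun a c d hcd hsub => ?_⟩
  · rw [dist_shear_self]
    exact (g.norm_coe_le_norm _).trans_lt hg
  · obtain ⟨p, hcp, hpd⟩ := exists_rat_btwn (show c < d by linarith)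
    obtain ⟨q, hpq, hqd⟩ := exists_rat_btwn hpd
    have hclosed : IsClosed (shear g '' M) := (hM.image (shear g).continuous).isClosed
    exact hgood p q hpq
      ⟨a, (verticalSegment_mono hcp.le hqd.le).trans (hsub.trans hclosed.frontier_subset)⟩
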